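/- Let f : [0,∞) → ℝ satisfy |f(x₁) − f(x₂)|² ≤ L|x₁ − x₂|² for all x₁, x₂ ≥ 0, where L > 0 is a constant. Let Δx > 0 and Δt > 0 with Δt ≤ Δx, set λ = Δt/Δx, let m ≥ 1 and t = mΔt, and let T be the operator defined by (Tf)(x) = (1−λ) f(x) + λ f(x+Δx). Then for every x ≥ 0, |(T^m f)(x) − f(x+t)|² ≤ L t (Δx − Δt). -/

import Mathlib

/-!
`T` is the convex combination `(1 - λ) I + λ S` of the identity and the shift `S` by `Δx`, so by
the binomial theorem `T^m f (x) = ∑ₖ bₘₖ(λ) f (x + kΔx)` with the Bernstein weights `bₘₖ(λ)`: the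
expectation of `f (x + KΔx)` for a binomial variable `K ~ B(m, λ)`, and `KΔx` has mean `mλΔx = t`.
Jensen's inequality and the Lipschitz bound then control the squared error by `L` times the
variance of `KΔx`, which is `mλ(1 - λ)Δx² = t (Δx - Δt)`.
-/

open Finset Polynomial

namespace FiniteDifference

noncomputable abbrev shift (h : ℝ) : Module.End ℝ (ℝ → ℝ) := LinearMap.funLeft ℝ ℝ (· + h)

noncomputable def upwind (lam h : ℝ) : Module.End ℝ (ℝ → ℝ) := (1 - lam) • 1 + lam • shift h

lemma shift_pow_apply (h : ℝ) (k : ℕ) (g : ℝ → ℝ) (x : ℝ) :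
    (shift h ^ k) g x = g (x + k * h) := by
  induction k generalizing x with
  | zero => simp
  | succ k ih =>
    rw [pow_succ', Module.End.mul_apply, LinearMap.funLeft_apply, ih]
    push_cast
    ring_nf

lemma upwind_pow_apply (lam h : ℝ) (m : ℕ) (g : ℝ → ℝ) (x : ℝ) :
    (upwind lam h ^ m) g x =
      ∑ k ∈ range (m + 1), (bernsteinPolynomial ℝ m k).eval lam * g (x + k * h) := by
  have hc : Commute (lam • shift h) ((1 - lam) • (1 : Module.End ℝ (ℝ → ℝ))) :=
    ((Commute.one_right _).smul_right _).smul_left _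
  rw [upwind, add_comm, hc.add_pow, LinearMap.sum_apply, Finset.sum_apply]
  refine sum_congr rfl fun k _ => ?_
  rw [_root_.smul_pow, _root_.smul_pow, one_pow, Module.End.mul_apply, Module.End.mul_apply,
    LinearMap.smul_apply, LinearMap.smul_apply, Module.End.one_apply, Module.End.natCast_apply,
    Pi.smul_apply, shift_pow_apply]
  simp only [nsmul_eq_mul, Pi.smul_apply, Pi.mul_apply, Pi.natCast_apply, smul_eq_mul,
    bernsteinPolynomial, eval_mul, eval_natCast, eval_pow, eval_X, eval_sub, eval_one]
  ring

lemma iterate_apply_eq_upwind_pow_apply {lam h : ℝ} (hh : 0 ≤ h) (T : (ℝ → ℝ) → (ℝ → ℝ))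
    (hT : ∀ (g : ℝ → ℝ) (x : ℝ), 0 ≤ x → T g x = (1 - lam) * g x + lam * g (x + h))
    (m : ℕ) (g : ℝ → ℝ) {x : ℝ} (hx : 0 ≤ x) :
    T^[m] g x = (upwind lam h ^ m) g x := by
  induction m generalizing x with
  | zero => simp
  | succ m ih =>
    rw [Function.iterate_succ_apply', hT _ _ hx, ih hx, ih (by positivity), pow_succ',
      Module.End.mul_apply]
    simp [upwind]

lemma bernsteinPolynomial_eval_nonneg {lam : ℝ} (h₀ : 0 ≤ lam) (h₁ : lam ≤ 1) (m k : ℕ) :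
    0 ≤ (bernsteinPolynomial ℝ m k).eval lam := by
  have : 0 ≤ 1 - lam := by linarith
  simp only [bernsteinPolynomial, eval_mul, eval_natCast, eval_pow, eval_X, eval_sub, eval_one]
  positivity

lemma sum_bernsteinPolynomial_eval (lam : ℝ) (m : ℕ) :
    ∑ k ∈ range (m + 1), (bernsteinPolynomial ℝ m k).eval lam = 1 := by
  simpa [eval_finsetSum] using congrArg (eval lam) (bernsteinPolynomial.sum ℝ m)

lemma sum_bernsteinPolynomial_eval_mul_sq (lam h : ℝ) (m : ℕ) :
    ∑ k ∈ range (m + 1), (bernsteinPolynomial ℝ m k).eval lam * (k * h - m * lam * h) ^ 2 =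
      m * lam * (1 - lam) * h ^ 2 := by
  have hvar := congrArg (eval lam) (bernsteinPolynomial.variance ℝ m)
  simp only [nsmul_eq_mul, eval_finsetSum, eval_mul, eval_pow, eval_sub, eval_natCast, eval_X,
    eval_one] at hvar
  rw [← hvar, sum_mul]
  exact sum_congr rfl fun k _ => by ring

lemma sq_sum_mul_sub_le {ι : Type*} {s : Finset ι} {w y : ι → ℝ} {g : ℝ → ℝ} {L z : ℝ}
    (hw₀ : ∀ i ∈ s, 0 ≤ w i) (hw₁ : ∑ i ∈ s, w i = 1)
    (hg : ∀ i ∈ s, (g (y i) - g z) ^ 2 ≤ L * (y i - z) ^ 2) :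
    (∑ i ∈ s, w i * g (y i) - g z) ^ 2 ≤ L * ∑ i ∈ s, w i * (y i - z) ^ 2 := by
  have hsub : ∑ i ∈ s, w i * g (y i) - g z = ∑ i ∈ s, w i * (g (y i) - g z) := by
    simp only [mul_sub, sum_sub_distrib, ← sum_mul, hw₁, one_mul]
  calc (∑ i ∈ s, w i * g (y i) - g z) ^ 2
      ≤ ∑ i ∈ s, w i * (g (y i) - g z) ^ 2 := by
        rw [hsub]
        exact even_two.convexOn_pow.map_sum_le hw₀ hw₁ fun _ _ => Set.mem_univ _
    _ ≤ ∑ i ∈ s, w i * (L * (y i - z) ^ 2) :=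
        sum_le_sum fun i hi => mul_le_mul_of_nonneg_left (hg i hi) (hw₀ i hi)
    _ = L * ∑ i ∈ s, w i * (y i - z) ^ 2 := by
        rw [mul_sum]
        exact sum_congr rfl fun i _ => by ring

end FiniteDifference

open FiniteDifference in
theorem square_error_iterated_operator_vs_shift_lipschitz_general
    (f : ℝ → ℝ) (L : ℝ)
    (hlip : ∀ x₁ x₂ : ℝ, 0 ≤ x₁ → 0 ≤ x₂ → |f x₁ - f x₂| ^ 2 ≤ L * |x₁ - x₂| ^ 2)
    (Δx Δt lam t : ℝ) (hΔx : 0 < Δx) (hΔt : 0 < Δt) (hle : Δt ≤ Δx)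
    (hlam : lam = Δt / Δx) (m : ℕ) (ht : t = m * Δt)
    (T : (ℝ → ℝ) → (ℝ → ℝ))
    (hT : ∀ (g : ℝ → ℝ) (x : ℝ), 0 ≤ x → T g x = (1 - lam) * g x + lam * g (x + Δx))
    (x : ℝ) (hx : 0 ≤ x) :
    |(T^[m] f) x - f (x + t)| ^ 2 ≤ L * t * (Δx - Δt) := by
  have hΔt_eq : Δt = lam * Δx := by rw [hlam, div_mul_cancel₀ _ hΔx.ne']
  have hlam₀ : 0 ≤ lam := hlam ▸ by positivity
  have hlam₁ : lam ≤ 1 := hlam ▸ div_le_one_of_le₀ hle hΔx.le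
  have ht₀ : 0 ≤ t := ht ▸ by positivity
  rw [iterate_apply_eq_upwind_pow_apply hΔx.le T hT m f hx, upwind_pow_apply, sq_abs]
  calc _ ≤ L * ∑ k ∈ range (m + 1),
          (bernsteinPolynomial ℝ m k).eval lam * (x + k * Δx - (x + t)) ^ 2 :=
        sq_sum_mul_sub_le (fun k _ => bernsteinPolynomial_eval_nonneg hlam₀ hlam₁ m k)
          (sum_bernsteinPolynomial_eval lam m) fun k _ => by
            simpa only [sq_abs] using hlip _ _ (by positivity) (by positivity)
    _ = L * (m * lam * (1 - lam) * Δx ^ 2) := by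
        rw [← sum_bernsteinPolynomial_eval_mul_sq, ht, hΔt_eq]
        congr 1
        exact sum_congr rfl fun k _ => by ring
    _ = L * t * (Δx - Δt) := by rw [ht, hΔt_eq]; ring

/-- Deterministic convergence of the iterated finite-difference operator to the shift:
if `|f(x₁) − f(x₂)|² ≤ L|x₁ − x₂|²` for all `x₁, x₂ ≥ 0`, `(Tf)(x) = (1−λ)f(x) + λf(x+Δx)`
with `λ = Δt/Δx`, `Δt ≤ Δx` and `t = mΔt`, then `|(T^m f)(x) − f(x+t)|² ≤ L t (Δx − Δt)`. -/
theorem square_error_iterated_operator_vs_shift_lipschitz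
    (f : ℝ → ℝ) (L : ℝ) (hL : 0 < L)
    (hlip : ∀ x₁ x₂ : ℝ, 0 ≤ x₁ → 0 ≤ x₂ → |f x₁ - f x₂| ^ 2 ≤ L * |x₁ - x₂| ^ 2)
    (Δx Δt lam t : ℝ) (hΔx : 0 < Δx) (hΔt : 0 < Δt) (hle : Δt ≤ Δx)
    (hlam : lam = Δt / Δx) (m : ℕ) (hm : 1 ≤ m) (ht : t = m * Δt)
    (T : (ℝ → ℝ) → (ℝ → ℝ))
    (hT : ∀ (g : ℝ → ℝ) (x : ℝ), 0 ≤ x → T g x = (1 - lam) * g x + lam * g (x + Δx))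
    (x : ℝ) (hx : 0 ≤ x) :
    |(T^[m] f) x - f (x + t)| ^ 2 ≤ L * t * (Δx - Δt) :=
  square_error_iterated_operator_vs_shift_lipschitz_general f L hlip Δx Δt lam t hΔx hΔt hle hlam m
    ht T hT x hx
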